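/- Let U ⊆ ℂ be a nonempty bounded open set and let V ⊇ closure(U) be open. Let R > 0, let α, β : ℂ → ℂ be holomorphic (complex-differentiable) on V with α(z) ≠ 0 and β(z) ≠ 0 for all z ∈ V, and let h : ℂ → ℝ be positive and smooth on V satisfying the R-scaled vortex equation for (α, β) on V: Δ(log ∘ h)(z) = 4R²(|α(z)|²·h(z)² − |β(z)|²·h(z)⁻²) for all z ∈ V. If |α(z)|·h(z)² < |β(z)| for every z in the topological frontier of U, then |α(z)|·h(z)² < |β(z)| for every z ∈ U. -/

import Mathlib

/-- The Euclidean Laplacian of a function `u : ℂ → ℝ`, where `ℂ` is regarded as a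
two-dimensional real inner product space: `Δu = ∂²u/∂x² + ∂²u/∂y²`. -/
noncomputable def laplacian (u : ℂ → ℝ) (z : ℂ) : ℝ :=
  fderiv ℝ (fun w => fderiv ℝ u w 1) z 1 +
    fderiv ℝ (fun w => fderiv ℝ u w Complex.I) z Complex.I

theorem lap_neg (f : ℂ → ℝ) (z : ℂ) :
    laplacian (fun w => -f w) z = -laplacian f z := by
  have h1 : ∀ e : ℂ, (fun w => fderiv ℝ (fun x => -f x) w e) = (fun w => -(fderiv ℝ f w e)) := by
    intro e; funext w; rw [fderiv_fun_neg]; rfl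
  unfold laplacian
  rw [h1 1, h1 Complex.I, fderiv_fun_neg, fderiv_fun_neg]
  simp [laplacian]
  ring

theorem diffAt_fderiv_apply {f : ℂ → ℝ} {z : ℂ} (hf : ContDiffAt ℝ 2 f z) (e : ℂ) :
    DifferentiableAt ℝ (fun w => fderiv ℝ f w e) z := by
  have h1 : ContDiffAt ℝ 1 (fderiv ℝ f) z := hf.fderiv_right (by norm_num)
  exact (h1.differentiableAt (by norm_num)).clm_apply (differentiableAt_const e)

theorem lap_add {f g : ℂ → ℝ} {z : ℂ} (hf : ContDiffAt ℝ 2 f z) (hg : ContDiffAt ℝ 2 g z) :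
    laplacian (fun w => f w + g w) z = laplacian f z + laplacian g z := by
  have hev : ∀ e : ℂ, (fun w => fderiv ℝ (fun x => f x + g x) w e)
      =ᶠ[nhds z] (fun w => fderiv ℝ f w e + fderiv ℝ g w e) := by
    intro e
    filter_upwards [hf.eventually (by norm_num), hg.eventually (by norm_num)] with w hfw hgw
    rw [fderiv_fun_add (hfw.differentiableAt (by norm_num)) (hgw.differentiableAt (by norm_num))]
    rfl
  have key : ∀ e : ℂ, fderiv ℝ (fun w => fderiv ℝ (fun x => f x + g x) w e) z e
      = fderiv ℝ (fun w => fderiv ℝ f w e) z e + fderiv ℝ (fun w => fderiv ℝ g w e) z e := by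
    intro e
    rw [(hev e).fderiv_eq, fderiv_fun_add (diffAt_fderiv_apply hf e) (diffAt_fderiv_apply hg e)]
    rfl
  unfold laplacian
  rw [key 1, key Complex.I]; ring

theorem fderiv_re_comp {G : ℂ → ℂ} {w : ℂ} (hG : DifferentiableAt ℂ G w) (e : ℂ) :
    fderiv ℝ (fun x => (G x).re) w e = (e * deriv G w).re := by
  have h1 : HasFDerivAt G ((fderiv ℂ G w).restrictScalars ℝ) w :=
    hG.hasFDerivAt.restrictScalars ℝ
  have h2 : HasFDerivAt (fun x => (G x).re)
      (Complex.reCLM.comp ((fderiv ℂ G w).restrictScalars ℝ)) w :=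
    (Complex.reCLM.hasFDerivAt).comp w h1
  rw [h2.fderiv]
  have : fderiv ℂ G w e = e * deriv G w := by
    have := (fderiv ℂ G w).map_smul e (1 : ℂ)
    simp only [smul_eq_mul, mul_one] at this
    rw [this]; rfl
  simp [ContinuousLinearMap.comp_apply, this]

theorem lap_re_holo {G : ℂ → ℂ} {W : Set ℂ} (hW : IsOpen W) (hG : DifferentiableOn ℂ G W)
    {z : ℂ} (hz : z ∈ W) : laplacian (fun x => (G x).re) z = 0 := by
  have hGa : AnalyticOnNhd ℂ G W := hG.analyticOnNhd hW
  have hG' : AnalyticOnNhd ℂ (deriv G) W := hGa.deriv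
  have hev1 : (fun w => fderiv ℝ (fun x => (G x).re) w 1)
      =ᶠ[nhds z] (fun w => (deriv G w).re) := by
    filter_upwards [hW.mem_nhds hz] with w hw
    rw [fderiv_re_comp (hGa w hw).differentiableAt 1, one_mul]
  have hevI : (fun w => fderiv ℝ (fun x => (G x).re) w Complex.I)
      =ᶠ[nhds z] (fun w => (Complex.I * deriv G w).re) := by
    filter_upwards [hW.mem_nhds hz] with w hw
    rw [fderiv_re_comp (hGa w hw).differentiableAt Complex.I]
  have t1 : fderiv ℝ (fun w => fderiv ℝ (fun x => (G x).re) w 1) z 1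
      = (deriv (deriv G) z).re := by
    rw [hev1.fderiv_eq, fderiv_re_comp (hG' z hz).differentiableAt 1, one_mul]
  have t2 : fderiv ℝ (fun w => fderiv ℝ (fun x => (G x).re) w Complex.I) z Complex.I
      = -(deriv (deriv G) z).re := by
    rw [hevI.fderiv_eq]
    have heq : (fun w => (Complex.I * deriv G w).re)
        = (fun w => ((fun x => Complex.I * deriv G x) w).re) := rfl
    rw [heq, fderiv_re_comp (((hG' z hz).differentiableAt).const_mul Complex.I) Complex.I]
    rw [deriv_const_mul Complex.I (hG' z hz).differentiableAt]
    have : Complex.I * (Complex.I * deriv (deriv G) z) = -deriv (deriv G) z := by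
      rw [← mul_assoc, Complex.I_mul_I, neg_one_mul]
    rw [this, Complex.neg_re]
  unfold laplacian
  rw [t1, t2]; ring

theorem logabs_package {f : ℂ → ℂ} {V : Set ℂ} (hV : IsOpen V)
    (hf : DifferentiableOn ℂ f V) (hf0 : ∀ z ∈ V, f z ≠ 0) {z₀ : ℂ} (hz₀ : z₀ ∈ V) :
    laplacian (fun w => Real.log (‖f w‖)) z₀ = 0 ∧
      ContDiffAt ℝ 2 (fun w => Real.log (‖f w‖)) z₀ := by
  set c : ℂ := (‖f z₀‖ : ℂ) / f z₀ with hc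
  have hfz0 : f z₀ ≠ 0 := hf0 z₀ hz₀
  have habsc : ‖c‖ = 1 := by
    rw [hc, norm_div, Complex.norm_real, norm_norm,
      div_self (norm_ne_zero_iff.mpr hfz0)]
  set W : Set ℂ := V ∩ (fun w => c * f w) ⁻¹' Complex.slitPlane with hWdef
  have hWopen : IsOpen W :=
    (continuousOn_const.mul hf.continuousOn).isOpen_inter_preimage hV Complex.isOpen_slitPlane
  have hzW : z₀ ∈ W := by
    refine ⟨hz₀, ?_⟩
    have : c * f z₀ = (‖f z₀‖ : ℂ) := by
      rw [hc, div_mul_cancel₀ _ hfz0]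
    simp only [Set.mem_preimage, this]
    exact Complex.mem_slitPlane_iff.2 (Or.inl (by
      simp [Complex.ofReal_re, norm_pos_iff.mpr hfz0]))
  set G : ℂ → ℂ := fun w => Complex.log (c * f w) with hGdef
  have hGdiff : DifferentiableOn ℂ G W := by
    intro w hw
    exact ((Complex.differentiableAt_log hw.2).comp w
      ((hf.differentiableAt (hV.mem_nhds hw.1)).const_mul c)).differentiableWithinAt
  have heq : (fun w => Real.log (‖f w‖)) = fun w => (G w).re := by
    funext w
    rw [hGdef]
    simp only [Complex.log_re, norm_mul, habsc, one_mul]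
  constructor
  · rw [heq]; exact lap_re_holo hWopen hGdiff hzW
  · rw [heq]
    have hGan : AnalyticOnNhd ℂ G W := hGdiff.analyticOnNhd hWopen
    have : ContDiffAt ℝ 2 G z₀ := ((hGan z₀ hzW).contDiffAt).restrict_scalars ℝ
    exact (Complex.reCLM.contDiff.contDiffAt).comp z₀ this

theorem barrier_hasFDeriv (ε K r : ℝ) (w : ℂ) :
    HasFDerivAt (fun x : ℂ => ε * Real.exp (K * (x.re + r)))
      ((ε * K * Real.exp (K * (w.re + r))) • (Complex.reCLM : ℂ →L[ℝ] ℝ)) w := by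
  have hA : HasFDerivAt (fun x : ℂ => K * (x.re + r)) (K • (Complex.reCLM : ℂ →L[ℝ] ℝ)) w := by
    have : HasFDerivAt (fun x : ℂ => x.re + r) (Complex.reCLM : ℂ →L[ℝ] ℝ) w :=
      (Complex.reCLM.hasFDerivAt).add_const r
    simpa using this.const_mul K
  have hexp : HasDerivAt Real.exp (Real.exp (K * (w.re + r))) (K * (w.re + r)) :=
    Real.hasDerivAt_exp _
  have := (hexp.comp_hasFDerivAt w hA).const_mul ε
  refine this.congr_fderiv ?_
  ext v
  simp [ContinuousLinearMap.smul_apply]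
  ring

theorem lap_barrier (ε K r : ℝ) (z : ℂ) :
    laplacian (fun x : ℂ => ε * Real.exp (K * (x.re + r))) z
      = K ^ 2 * (ε * Real.exp (K * (z.re + r))) := by
  have hfd : ∀ w e, fderiv ℝ (fun x : ℂ => ε * Real.exp (K * (x.re + r))) w e
      = ε * K * Real.exp (K * (w.re + r)) * e.re := by
    intro w e
    rw [(barrier_hasFDeriv ε K r w).fderiv]
    simp [ContinuousLinearMap.smul_apply]
  have h1 : (fun w => fderiv ℝ (fun x : ℂ => ε * Real.exp (K * (x.re + r))) w 1)
      = fun w => (ε * K) * Real.exp (K * (w.re + r)) := by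
    funext w; rw [hfd]; simp
  have hI : (fun w => fderiv ℝ (fun x : ℂ => ε * Real.exp (K * (x.re + r))) w Complex.I)
      = fun _ => (0:ℝ) := by
    funext w; rw [hfd]; simp
  unfold laplacian
  rw [h1, hI, fderiv_fun_const]
  have h2 : HasFDerivAt (fun w : ℂ => ε * K * Real.exp (K * (w.re + r)))
      ((ε * K * K * Real.exp (K * (z.re + r))) • (Complex.reCLM : ℂ →L[ℝ] ℝ)) z := by
    have := barrier_hasFDeriv (ε * K) K r z
    convert this using 2 <;> ring
  rw [h2.fderiv]
  simp [ContinuousLinearMap.smul_apply]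
  ring

theorem contDiff_barrier (ε K r : ℝ) :
    ContDiff ℝ 2 (fun x : ℂ => ε * Real.exp (K * (x.re + r))) := by
  apply ContDiff.mul contDiff_const
  exact Real.contDiff_exp.comp (ContDiff.mul contDiff_const
    ((Complex.reCLM.contDiff).add contDiff_const))

theorem second_deriv_nonpos {v : ℂ → ℝ} {W : Set ℂ} (hW : IsOpen W)
    (hv : ∀ w ∈ W, ContDiffAt ℝ 2 v w) {z : ℂ} (hz : z ∈ W)
    (hmax : IsLocalMax v z) (e : ℂ) :
    fderiv ℝ (fun w => fderiv ℝ v w e) z e ≤ 0 := by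
  set L : ℝ → ℂ := fun t => z + t • e with hL
  have hL0 : L 0 = z := by simp [hL]
  have hLc : Continuous L := by fun_prop
  have hLd : ∀ t : ℝ, HasDerivAt L e t := by
    intro t
    have : HasDerivAt (fun s : ℝ => z + s • e) ((1:ℝ) • e) t :=
      ((hasDerivAt_id t).smul_const e).const_add z
    simpa only [one_smul] using this
  set φ : ℝ → ℝ := fun t => v (L t) with hφ
  set ψ : ℝ → ℝ := fun t => fderiv ℝ v (L t) e with hψ
  have hφmax : IsLocalMax φ 0 := by
    apply IsMaxFilter.comp_tendsto
    · rw [hL0] at *; exact hmax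
    · rw [← hL0] at *; exact hLc.continuousAt
  have hevW : ∀ᶠ t in nhds (0:ℝ), L t ∈ W := by
    have : Filter.Tendsto L (nhds 0) (nhds z) := hL0 ▸ hLc.continuousAt
    exact this.eventually (hW.eventually_mem hz)
  have hφψ : ∀ᶠ t in nhds (0:ℝ), HasDerivAt φ (ψ t) t := by
    filter_upwards [hevW] with t ht
    have hd : DifferentiableAt ℝ v (L t) := (hv _ ht).differentiableAt (by norm_num)
    exact hd.hasFDerivAt.comp_hasDerivAt t (hLd t)
  have hψ0 : ψ 0 = 0 := by
    have h0 : HasDerivAt φ (ψ 0) 0 := hφψ.self_of_nhds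
    rw [← h0.deriv]
    exact hφmax.deriv_eq_zero
  set s : ℝ := fderiv ℝ (fun w => fderiv ℝ v w e) z e with hs
  by_contra hpos
  push_neg at hpos
  have hψd : HasDerivAt ψ s 0 := by
    have hdf : DifferentiableAt ℝ (fun w => fderiv ℝ v w e) z := diffAt_fderiv_apply (hv z hz) e
    have hdf' : HasFDerivAt (fun w => fderiv ℝ v w e)
        (fderiv ℝ (fun w => fderiv ℝ v w e) z) (L 0) := hL0 ▸ hdf.hasFDerivAt
    have := hdf'.comp_hasDerivAt 0 (hLd 0)
    exact this
  have hslope : Filter.Tendsto (slope ψ 0) (nhdsWithin 0 {0}ᶜ) (nhds s) :=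
    hasDerivAt_iff_tendsto_slope.1 hψd
  have hevpos : ∀ᶠ t in nhdsWithin 0 {0}ᶜ, 0 < slope ψ 0 t :=
    hslope.eventually (eventually_gt_nhds hpos)
  rw [eventually_nhdsWithin_iff] at hevpos
  obtain ⟨δ₁, hδ₁, h1⟩ := Metric.eventually_nhds_iff.1 hevpos
  obtain ⟨δ₂, hδ₂, h2⟩ := Metric.eventually_nhds_iff.1 hφψ
  obtain ⟨δ₃, hδ₃, h3⟩ := Metric.eventually_nhds_iff.1 hφmax
  set δ : ℝ := min δ₁ (min δ₂ δ₃) / 2 with hδdef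
  have hδpos : 0 < δ := by positivity
  have hδlt : ∀ t : ℝ, t ∈ Set.Icc 0 δ → dist t (0:ℝ) < min δ₁ (min δ₂ δ₃) := by
    intro t ht
    rw [Real.dist_eq, sub_zero, abs_of_nonneg ht.1]
    calc t ≤ δ := ht.2
    _ < min δ₁ (min δ₂ δ₃) := by
      rw [hδdef]; exact half_lt_self (by positivity)
  have hmono : StrictMonoOn φ (Set.Icc 0 δ) := by
    apply strictMonoOn_of_deriv_pos (convex_Icc 0 δ)
    · intro t ht
      exact (h2 (hδlt t ht |>.trans_le (le_trans (min_le_right _ _) (min_le_left _ _)))).differentiableAt.continuousAt.continuousWithinAt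
    · intro t ht
      rw [interior_Icc] at ht
      have htIcc : t ∈ Set.Icc 0 δ := ⟨le_of_lt ht.1, le_of_lt ht.2⟩
      have hdφ : HasDerivAt φ (ψ t) t :=
        h2 (hδlt t htIcc |>.trans_le (le_trans (min_le_right _ _) (min_le_left _ _)))
      rw [hdφ.deriv]
      have hsl : 0 < slope ψ 0 t := by
        apply h1 ((hδlt t htIcc).trans_le (min_le_left _ _))
        rw [Set.mem_compl_iff, Set.mem_singleton_iff]; exact ne_of_gt ht.1
      rw [slope_def_field, hψ0, sub_zero, sub_zero] at hsl
      have := mul_pos hsl ht.1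
      rwa [div_mul_cancel₀ _ (ne_of_gt ht.1)] at this
  have hle : φ δ ≤ φ 0 := by
    apply h3
    exact (hδlt δ ⟨le_of_lt hδpos, le_refl δ⟩).trans_le
      (le_trans (min_le_right _ _) (min_le_right _ _))
  have hlt : φ 0 < φ δ := hmono ⟨le_refl 0, le_of_lt hδpos⟩ ⟨le_of_lt hδpos, le_refl δ⟩ hδpos
  linarith

theorem lap_nonpos_of_localMax {v : ℂ → ℝ} {W : Set ℂ} (hW : IsOpen W)
    (hv : ∀ w ∈ W, ContDiffAt ℝ 2 v w) {z : ℂ} (hz : z ∈ W)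
    (hmax : IsLocalMax v z) : laplacian v z ≤ 0 := by
  have h1 := second_deriv_nonpos hW hv hz hmax 1
  have hI := second_deriv_nonpos hW hv hz hmax Complex.I
  unfold laplacian
  linarith

/-- Local form of the key lemma bounding the Beltrami coefficient. -/
theorem beltrami_bound (U V : Set ℂ) (hne : U.Nonempty) (hU : IsOpen U)
    (hbd : Bornology.IsBounded U) (hV : IsOpen V) (hUV : closure U ⊆ V)
    (R : ℝ) (hR : 0 < R)
    (α β : ℂ → ℂ) (hα : DifferentiableOn ℂ α V) (hβ : DifferentiableOn ℂ β V)
    (hα0 : ∀ z ∈ V, α z ≠ 0) (hβ0 : ∀ z ∈ V, β z ≠ 0)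
    (h : ℂ → ℝ) (hpos : ∀ z ∈ V, 0 < h z) (hsm : ContDiffOn ℝ (⊤ : ℕ∞) h V)
    (hvortex : ∀ z ∈ V, laplacian (Real.log ∘ h) z =
      4 * R ^ 2 * (‖α z‖ ^ 2 * h z ^ 2 -
        ‖β z‖ ^ 2 * (h z ^ 2)⁻¹))
    (hbdry : ∀ z ∈ frontier U, ‖α z‖ * h z ^ 2 < ‖β z‖) :
    ∀ z ∈ U, ‖α z‖ * h z ^ 2 < ‖β z‖ := by
  by_contra hcon
  push_neg at hcon
  obtain ⟨z₁, hz₁U, hz₁⟩ := hcon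
  have hUsubV : U ⊆ V := fun z hz => hUV (subset_closure hz)
  -- the function u
  set u : ℂ → ℝ := fun w => Real.log (‖α w‖)
      + (Real.log (h w) + Real.log (h w)) + -(Real.log (‖β w‖)) with hudef
  -- basic positivity
  have habs : ∀ z ∈ V, 0 < ‖α z‖ ∧ 0 < ‖β z‖ ∧ 0 < h z :=
    fun z hz => ⟨norm_pos_iff.mpr (hα0 z hz), norm_pos_iff.mpr (hβ0 z hz), hpos z hz⟩
  -- smoothness of pieces
  have hlh : ∀ z ∈ V, ContDiffAt ℝ 2 (fun w => Real.log (h w)) z := by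
    intro z hz
    exact (Real.contDiffAt_log.2 (ne_of_gt (hpos z hz))).comp z
      ((hsm.contDiffAt (hV.mem_nhds hz)).of_le (WithTop.coe_le_coe.2 le_top))
  have hu2 : ∀ z ∈ V, ContDiffAt ℝ 2 u z := by
    intro z hz
    exact (((logabs_package hV hα hα0 hz).2).add ((hlh z hz).add (hlh z hz))).add
      ((logabs_package hV hβ hβ0 hz).2).neg
  -- the Laplacian of u
  have hlapu : ∀ z ∈ V, laplacian u z
      = 8 * R ^ 2 * (‖α z‖ ^ 2 * h z ^ 2
        - ‖β z‖ ^ 2 * (h z ^ 2)⁻¹) := by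
    intro z hz
    have hlogh : laplacian (fun w => Real.log (h w)) z
        = 4 * R ^ 2 * (‖α z‖ ^ 2 * h z ^ 2
          - ‖β z‖ ^ 2 * (h z ^ 2)⁻¹) := hvortex z hz
    have e1 : laplacian u z
        = laplacian (fun w => Real.log (‖α w‖)
            + (Real.log (h w) + Real.log (h w))) z
          + laplacian (fun w => -(Real.log (‖β w‖))) z :=
      lap_add (((logabs_package hV hα hα0 hz).2).add ((hlh z hz).add (hlh z hz)))
        ((logabs_package hV hβ hβ0 hz).2).neg
    have e2 : laplacian (fun w => Real.log (‖α w‖)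
          + (Real.log (h w) + Real.log (h w))) z
        = laplacian (fun w => Real.log (‖α w‖)) z
          + laplacian (fun w => Real.log (h w) + Real.log (h w)) z :=
      lap_add ((logabs_package hV hα hα0 hz).2) ((hlh z hz).add (hlh z hz))
    have e3 : laplacian (fun w => Real.log (h w) + Real.log (h w)) z
        = laplacian (fun w => Real.log (h w)) z + laplacian (fun w => Real.log (h w)) z :=
      lap_add (hlh z hz) (hlh z hz)
    rw [e1, e2, e3, lap_neg, (logabs_package hV hα hα0 hz).1,
      (logabs_package hV hβ hβ0 hz).1, hlogh]
    ring
  -- u as a single logarithm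
  have hkey : ∀ z ∈ V, u z
      = Real.log (‖α z‖ * h z ^ 2 / ‖β z‖) := by
    intro z hz
    obtain ⟨ha, hb, hh⟩ := habs z hz
    rw [Real.log_div (by positivity) (ne_of_gt hb), Real.log_mul (ne_of_gt ha) (by positivity),
      Real.log_pow]
    simp only [hudef]
    push_cast
    ring
  -- u < 0 on the frontier, u z₁ ≥ 0
  have hfr : ∀ z ∈ frontier U, u z < 0 := by
    intro z hz
    have hzV : z ∈ V := hUV (frontier_subset_closure.trans Set.Subset.rfl hz)
    obtain ⟨ha, hb, hh⟩ := habs z hzV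
    rw [hkey z hzV]
    exact Real.log_neg (by positivity) ((div_lt_one hb).2 (hbdry z hz))
  have hz₁pos : 0 ≤ u z₁ := by
    have hzV : z₁ ∈ V := hUsubV hz₁U
    obtain ⟨ha, hb, hh⟩ := habs z₁ hzV
    rw [hkey z₁ hzV]
    exact Real.log_nonneg ((one_le_div hb).2 hz₁)
  -- compactness
  have hKc : IsCompact (closure U) :=
    Metric.isCompact_of_isClosed_isBounded isClosed_closure hbd.closure
  have hclV : closure U ⊆ V := hUV
  have hucont : ContinuousOn u (closure U) :=
    fun z hz => ((hu2 z (hclV hz)).continuousAt).continuousWithinAt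
  -- δ on the frontier
  have hfrc : IsCompact (frontier U) :=
    Metric.isCompact_of_isClosed_isBounded isClosed_frontier
      (hbd.closure.subset frontier_subset_closure)
  obtain ⟨δ, hδpos, hδ⟩ : ∃ δ : ℝ, 0 < δ ∧ ∀ z ∈ frontier U, u z ≤ -δ := by
    rcases (frontier U).eq_empty_or_nonempty with hfe | hfne
    · exact ⟨1, one_pos, fun z hz => by rw [hfe] at hz; exact absurd hz (Set.notMem_empty z)⟩
    · obtain ⟨zm, hzm, hzmax⟩ := hfrc.exists_isMaxOn hfne
        (hucont.mono frontier_subset_closure)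
      refine ⟨-u zm, by linarith [hfr zm hzm], fun z hz => ?_⟩
      have := hzmax hz
      simp only [neg_neg]
      exact this
  -- Q₀
  set q : ℂ → ℝ := fun w => 16 * R ^ 2 * ‖β w‖ ^ 2 / h w ^ 2 with hqdef
  have hqcont : ContinuousOn q (closure U) := by
    intro w hw
    have hwV : w ∈ V := hclV hw
    have hβc : ContinuousAt β w := (hβ.differentiableAt (hV.mem_nhds hwV)).continuousAt
    have hhc : ContinuousAt h w :=
      ((hsm.contDiffAt (hV.mem_nhds hwV)).of_le (WithTop.coe_le_coe.2 le_top) : ContDiffAt ℝ 2 h w).continuousAt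
    exact ((continuousAt_const.mul ((continuous_norm.continuousAt.comp hβc).pow 2)).div
      (hhc.pow 2) (pow_pos (hpos w hwV) 2).ne').continuousWithinAt
  have hclne : (closure U).Nonempty := hne.mono subset_closure
  obtain ⟨zq, hzq, hQmax⟩ := hKc.exists_isMaxOn hclne hqcont
  set Q₀ : ℝ := q zq with hQ₀def
  have hQ₀pos : 0 < Q₀ := by
    obtain ⟨ha, hb, hh⟩ := habs zq (hclV hzq)
    rw [hQ₀def, hqdef]
    positivity
  set K : ℝ := Real.sqrt Q₀ + 1 with hKdef
  have hKpos : 0 < K := by positivity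
  have hK2 : Q₀ < K ^ 2 := by
    have h1 := Real.sq_sqrt hQ₀pos.le
    have h2 := Real.sqrt_nonneg Q₀
    nlinarith
  -- radius
  obtain ⟨r, hr⟩ := hbd.subset_closedBall 0
  have hrcl : closure U ⊆ Metric.closedBall 0 r :=
    closure_minimal hr Metric.isClosed_closedBall
  have hrpos : 0 ≤ r := by
    have := hrcl (subset_closure hz₁U)
    rw [Metric.mem_closedBall, dist_zero_right] at this
    exact le_trans (norm_nonneg _) this
  set C : ℝ := Real.exp (K * (2 * r)) with hCdef
  have hC1 : 1 ≤ C := Real.one_le_exp (by positivity)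
  set ε : ℝ := δ / (2 * C) with hεdef
  have hεpos : 0 < ε := by positivity
  set g : ℂ → ℝ := fun w => ε * Real.exp (K * (w.re + r)) with hgdef
  have hgpos : ∀ w, 0 < g w := fun w => by rw [hgdef]; positivity
  have hgects : ∀ z ∈ closure U, ε ≤ g z ∧ g z ≤ ε * C := by
    intro z hz
    have hzb := hrcl hz
    rw [Metric.mem_closedBall, dist_zero_right] at hzb
    have h1 : -r ≤ z.re := by
      have := Complex.abs_re_le_norm z
      cases abs_le.1 (le_trans this hzb) with
      | intro hl hr2 => linarith
    have h2 : z.re ≤ r := by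
      have := Complex.abs_re_le_norm z
      cases abs_le.1 (le_trans this hzb) with
      | intro hl hr2 => linarith
    constructor
    · show ε ≤ ε * Real.exp (K * (z.re + r))
      nlinarith [Real.one_le_exp (by nlinarith : (0:ℝ) ≤ K * (z.re + r))]
    · show ε * Real.exp (K * (z.re + r)) ≤ ε * C
      rw [hCdef]
      have : Real.exp (K * (z.re + r)) ≤ Real.exp (K * (2 * r)) :=
        Real.exp_le_exp.2 (by nlinarith)
      nlinarith
  -- the comparison function v
  set v : ℂ → ℝ := fun w => u w + ε * Real.exp (K * (w.re + r)) with hvdef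
  have hvapp : ∀ w, v w = u w + g w := fun _ => rfl
  have hv2 : ∀ w ∈ V, ContDiffAt ℝ 2 v w :=
    fun w hw => (hu2 w hw).add ((contDiff_barrier ε K r).contDiffAt)
  have hvcont : ContinuousOn v (closure U) :=
    hucont.add ((contDiff_barrier ε K r).continuous.continuousOn)
  obtain ⟨z₂, hz₂cl, hmax⟩ := hKc.exists_isMaxOn hclne hvcont
  have hvz₂pos : 0 < v z₂ := by
    have h1 : v z₁ ≤ v z₂ := hmax (subset_closure hz₁U)
    have h2 : ε ≤ g z₁ := (hgects z₁ (subset_closure hz₁U)).1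
    have h3 : v z₁ = u z₁ + g z₁ := hvapp z₁
    linarith
  have hCne : (0:ℝ) < C := lt_of_lt_of_le one_pos hC1
  have hz₂U : z₂ ∈ U := by
    by_contra hz₂U
    have hfr₂ : z₂ ∈ frontier U := by
      rw [hU.frontier_eq]
      exact ⟨hz₂cl, hz₂U⟩
    have h1 : u z₂ ≤ -δ := hδ z₂ hfr₂
    have h2 : g z₂ ≤ ε * C := (hgects z₂ hz₂cl).2
    have h3 : ε * C = δ / 2 := by
      rw [hεdef]
      field_simp
    have h4 : v z₂ = u z₂ + g z₂ := hvapp z₂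
    linarith
  have hz₂V : z₂ ∈ V := hUsubV hz₂U
  -- local max and Laplacian sign
  have hlocmax : IsLocalMax v z₂ :=
    hmax.isLocalMax (Filter.mem_of_superset (hU.mem_nhds hz₂U) subset_closure)
  have hlapv_nonpos : laplacian v z₂ ≤ 0 :=
    lap_nonpos_of_localMax hV hv2 hz₂V hlocmax
  have hlapv : laplacian v z₂ = laplacian u z₂ + K ^ 2 * g z₂ := by
    have e := lap_add (f := u) (g := fun w : ℂ => ε * Real.exp (K * (w.re + r)))
      (hu2 z₂ hz₂V) ((contDiff_barrier ε K r).contDiffAt)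
    rw [lap_barrier] at e
    exact e
  -- lower bound for laplacian u z₂
  obtain ⟨ha₂, hb₂, hh₂⟩ := habs z₂ hz₂V
  have huz₂ : -g z₂ < u z₂ := by
    have h4 : v z₂ = u z₂ + g z₂ := hvapp z₂
    linarith
  have hratio : Real.exp (-g z₂) < ‖α z₂‖ * h z₂ ^ 2 / ‖β z₂‖ := by
    rw [hkey z₂ hz₂V] at huz₂
    exact (Real.lt_log_iff_exp_lt (by positivity)).1 huz₂
  have hsq : Real.exp (-(2 * g z₂)) * (‖β z₂‖ ^ 2 * (h z₂ ^ 2)⁻¹)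
      < ‖α z₂‖ ^ 2 * h z₂ ^ 2 := by
    have h1 : Real.exp (-g z₂) * Real.exp (-g z₂) = Real.exp (-(2 * g z₂)) := by
      rw [← Real.exp_add]; ring_nf
    have h2 : 0 < Real.exp (-g z₂) := Real.exp_pos _
    have h3 : Real.exp (-g z₂) * ‖β z₂‖ < ‖α z₂‖ * h z₂ ^ 2 := by
      rw [lt_div_iff₀ hb₂] at hratio
      linarith
    have h4 : 0 < Real.exp (-g z₂) * ‖β z₂‖ := by positivity
    have h5 : (Real.exp (-g z₂) * ‖β z₂‖) * (Real.exp (-g z₂) * ‖β z₂‖)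
        < (‖α z₂‖ * h z₂ ^ 2) * (‖α z₂‖ * h z₂ ^ 2) :=
      mul_lt_mul'' h3 h3 h4.le h4.le
    have h6 : (h z₂ ^ 2)⁻¹ * (h z₂ ^ 2) = 1 := inv_mul_cancel₀ (by positivity)
    have h7 : 0 < (h z₂ ^ 2)⁻¹ := by positivity
    calc Real.exp (-(2 * g z₂)) * (‖β z₂‖ ^ 2 * (h z₂ ^ 2)⁻¹)
        = ((Real.exp (-g z₂) * ‖β z₂‖) * (Real.exp (-g z₂) * ‖β z₂‖))
          * (h z₂ ^ 2)⁻¹ := by rw [← h1]; ring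
      _ < ((‖α z₂‖ * h z₂ ^ 2) * (‖α z₂‖ * h z₂ ^ 2)) * (h z₂ ^ 2)⁻¹ :=
          by exact mul_lt_mul_of_pos_right h5 h7
      _ = (‖α z₂‖ ^ 2 * h z₂ ^ 2) * ((h z₂ ^ 2)⁻¹ * (h z₂ ^ 2)) := by ring
      _ = ‖α z₂‖ ^ 2 * h z₂ ^ 2 := by rw [h6, mul_one]
  have hexp_lb : 1 - 2 * g z₂ ≤ Real.exp (-(2 * g z₂)) := by
    have := Real.add_one_le_exp (-(2 * g z₂))
    linarith
  have hlapu_lb : -(Q₀ * g z₂) < laplacian u z₂ := by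
    rw [hlapu z₂ hz₂V]
    have hq₂ : q z₂ ≤ Q₀ := hQmax hz₂cl
    have hq₂' : 16 * R ^ 2 * ‖β z₂‖ ^ 2 / h z₂ ^ 2 ≤ Q₀ := hq₂
    have hgz : 0 < g z₂ := hgpos z₂
    have hb2pos : 0 < ‖β z₂‖ ^ 2 * (h z₂ ^ 2)⁻¹ := by positivity
    have step : (1 - 2 * g z₂) * (‖β z₂‖ ^ 2 * (h z₂ ^ 2)⁻¹)
        < ‖α z₂‖ ^ 2 * h z₂ ^ 2 :=
      lt_of_le_of_lt (mul_le_mul_of_nonneg_right hexp_lb hb2pos.le) hsq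
    have hdivinv : 16 * R ^ 2 * ‖β z₂‖ ^ 2 / h z₂ ^ 2
        = 16 * R ^ 2 * (‖β z₂‖ ^ 2 * (h z₂ ^ 2)⁻¹) := by
      field_simp
    rw [hdivinv] at hq₂'
    have h8 : 16 * R ^ 2 * (‖β z₂‖ ^ 2 * (h z₂ ^ 2)⁻¹) * g z₂ ≤ Q₀ * g z₂ :=
      mul_le_mul_of_nonneg_right hq₂' hgz.le
    have hR2 : (0:ℝ) < 8 * R ^ 2 := by positivity
    have h9 : 8 * R ^ 2 * ((1 - 2 * g z₂) * (‖β z₂‖ ^ 2 * (h z₂ ^ 2)⁻¹))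
        < 8 * R ^ 2 * (‖α z₂‖ ^ 2 * h z₂ ^ 2) :=
      mul_lt_mul_of_pos_left step hR2
    have h11 : 8 * R ^ 2 * (‖α z₂‖ ^ 2 * h z₂ ^ 2
        - ‖β z₂‖ ^ 2 * (h z₂ ^ 2)⁻¹)
        = 8 * R ^ 2 * (‖α z₂‖ ^ 2 * h z₂ ^ 2)
          - 8 * R ^ 2 * (‖β z₂‖ ^ 2 * (h z₂ ^ 2)⁻¹) := by ring
    have h10 : 8 * R ^ 2 * ((1 - 2 * g z₂) * (‖β z₂‖ ^ 2 * (h z₂ ^ 2)⁻¹))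
        = 8 * R ^ 2 * (‖β z₂‖ ^ 2 * (h z₂ ^ 2)⁻¹)
          - 16 * R ^ 2 * (‖β z₂‖ ^ 2 * (h z₂ ^ 2)⁻¹) * g z₂ := by ring
    rw [h11]
    linarith
  -- contradiction
  have hfinal : 0 < laplacian v z₂ := by
    rw [hlapv]
    have hgz : 0 < g z₂ := hgpos z₂
    have := mul_lt_mul_of_pos_right hK2 hgz
    linarith
  linarith
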